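/- If y is obtained from x by a t-grain-error (i.e., y ∈ B_{t,G}(x)), then the number of runs of y is at most the number of runs of x: r(y) ≤ r(x). -/
import Mathlib


/-- `e` is a `t`-grain-error for `x`: weight at most `t`, `e₁ = 0`, and an error at
position `i` (2 ≤ i ≤ n) requires `x_i ≠ x_{i-1}`. (0-indexed here.) -/
def grainError {n : ℕ} (t : ℕ) (x e : Fin n → ZMod 2) : Prop :=
  (Finset.univ.filter fun i => e i ≠ 0).card ≤ t ∧
  (∀ i : Fin n, (i : ℕ) = 0 → e i = 0) ∧
  (∀ i : Fin n, 0 < (i : ℕ) → e i ≠ 0 →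
    x i ≠ x ⟨(i : ℕ) - 1, lt_of_le_of_lt (Nat.sub_le _ _) i.isLt⟩)

/-- The grain error-ball `B_{t,G}(x)`. -/
def grainBall {n : ℕ} (t : ℕ) (x : Fin n → ZMod 2) : Set (Fin n → ZMod 2) :=
  {y | ∃ e, grainError t x e ∧ y = x + e}

/-- The number of runs of a binary vector. -/
def runs {n : ℕ} (x : Fin n → ZMod 2) : ℕ :=
  (if n = 0 then 0 else 1) +
  (Finset.univ.filter fun i : Fin n =>
    0 < (i : ℕ) ∧ x i ≠ x ⟨(i : ℕ) - 1, lt_of_le_of_lt (Nat.sub_le _ _) i.isLt⟩).card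

lemma zmod2_ne_zero : ∀ a : ZMod 2, a ≠ 0 → a = 1 := by decide

lemma zmod2_ne_add_one : ∀ a b : ZMod 2, a ≠ b → a + 1 = b := by decide

/-- Flipping a single bit at a run boundary does not increase the number of runs. -/
lemma runs_flip {n : ℕ} (x : Fin n → ZMod 2) (i : Fin n) (hi : 0 < (i : ℕ))
    (hb : x i ≠ x ⟨(i : ℕ) - 1, lt_of_le_of_lt (Nat.sub_le _ _) i.isLt⟩) :
    runs (fun j => if j = i then x j + 1 else x j) ≤ runs x := by
  unfold runs
  apply Nat.add_le_add_left
  set x' : Fin n → ZMod 2 := fun j => if j = i then x j + 1 else x j with hx'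
  set B : Finset (Fin n) := Finset.univ.filter fun j : Fin n =>
    0 < (j : ℕ) ∧ x j ≠ x ⟨(j : ℕ) - 1, lt_of_le_of_lt (Nat.sub_le _ _) j.isLt⟩ with hB
  set B' : Finset (Fin n) := Finset.univ.filter fun j : Fin n =>
    0 < (j : ℕ) ∧ x' j ≠ x' ⟨(j : ℕ) - 1, lt_of_le_of_lt (Nat.sub_le _ _) j.isLt⟩ with hB'
  have hiB : i ∈ B := by simp [hB, hi, hb]
  have hpredne : (⟨(i : ℕ) - 1, lt_of_le_of_lt (Nat.sub_le _ _) i.isLt⟩ : Fin n) ≠ i := by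
    intro h
    have := congrArg Fin.val h
    simp at this
    omega
  set i₁ : Fin n := if h : (i : ℕ) + 1 < n then (⟨(i : ℕ) + 1, h⟩ : Fin n) else i with hi₁
  have hsub : B' ⊆ insert i₁ (B.erase i) := by
    intro j hj
    simp only [hB', Finset.mem_filter, Finset.mem_univ, true_and] at hj
    obtain ⟨hj0, hjne⟩ := hj
    have hji : j ≠ i := by
      intro h; subst h
      apply hjne
      simp only [hx', if_pos rfl, if_neg hpredne]
      exact zmod2_ne_add_one _ _ hb
    by_cases hcase : (j : ℕ) = (i : ℕ) + 1
    · have h1 : (i : ℕ) + 1 < n := hcase ▸ j.isLt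
      have : j = i₁ := by
        simp only [hi₁, dif_pos h1]
        exact Fin.ext hcase
      simp [this]
    · apply Finset.mem_insert_of_mem
      rw [Finset.mem_erase]
      refine ⟨hji, ?_⟩
      simp only [hB, Finset.mem_filter, Finset.mem_univ, true_and]
      refine ⟨hj0, ?_⟩
      have hpredne' : (⟨(j : ℕ) - 1, lt_of_le_of_lt (Nat.sub_le _ _) j.isLt⟩ : Fin n) ≠ i := by
        intro h
        have := congrArg Fin.val h
        simp at this
        omega
      simpa only [hx', if_neg hji, if_neg hpredne'] using hjne
  calc B'.card ≤ (insert i₁ (B.erase i)).card := Finset.card_le_card hsub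
    _ ≤ (B.erase i).card + 1 := Finset.card_insert_le _ _
    _ = B.card - 1 + 1 := by rw [Finset.card_erase_of_mem hiB]
    _ ≤ B.card := by
        have : 1 ≤ B.card := Finset.card_pos.mpr ⟨i, hiB⟩
        omega

lemma runs_aux {n : ℕ} : ∀ (k : ℕ) (x e : Fin n → ZMod 2),
    (Finset.univ.filter fun i => e i ≠ 0).card ≤ k →
    (∀ i : Fin n, (i : ℕ) = 0 → e i = 0) →
    (∀ i : Fin n, 0 < (i : ℕ) → e i ≠ 0 →
      x i ≠ x ⟨(i : ℕ) - 1, lt_of_le_of_lt (Nat.sub_le _ _) i.isLt⟩) →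
    runs (x + e) ≤ runs x := by
  intro k
  induction k with
  | zero =>
    intro x e hcard _ _
    have : e = 0 := by
      funext j
      simp only [Pi.zero_apply]
      by_contra hj
      have : j ∈ Finset.univ.filter fun i => e i ≠ 0 := by simp [hj]
      have := Finset.card_pos.mpr ⟨j, this⟩
      omega
    simp [this]
  | succ k ih =>
    intro x e hcard h0 hc
    set S : Finset (Fin n) := Finset.univ.filter fun i => e i ≠ 0 with hS
    by_cases hne : S.Nonempty
    · set i : Fin n := S.max' hne with hidef
      have hiS : i ∈ S := S.max'_mem hne
      have hei : e i ≠ 0 := by simpa [hS] using hiS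
      have hi0 : 0 < (i : ℕ) := by
        rcases Nat.eq_zero_or_pos (i : ℕ) with h | h
        · exact absurd (h0 i h) hei
        · exact h
      have hib := hc i hi0 hei
      set x' : Fin n → ZMod 2 := fun j => if j = i then x j + 1 else x j with hx'
      set e' : Fin n → ZMod 2 := fun j => if j = i then 0 else e j with he'
      have hsum : x + e = x' + e' := by
        funext j
        by_cases hj : j = i
        · subst hj
          simp [hx', he', Pi.add_apply, zmod2_ne_zero _ hei]
        · simp [hx', he', Pi.add_apply, hj]
      have hS' : (Finset.univ.filter fun j => e' j ≠ 0) = S.erase i := by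
        ext j
        by_cases hj : j = i <;> simp [he', hS, hj]
      have hcard' : (Finset.univ.filter fun j => e' j ≠ 0).card ≤ k := by
        rw [hS', Finset.card_erase_of_mem hiS]
        omega
      have h0' : ∀ j : Fin n, (j : ℕ) = 0 → e' j = 0 := by
        intro j hj
        by_cases hji : j = i
        · simp [he', hji]
        · simp only [he', if_neg hji]; exact h0 j hj
      have hc' : ∀ j : Fin n, 0 < (j : ℕ) → e' j ≠ 0 →
          x' j ≠ x' ⟨(j : ℕ) - 1, lt_of_le_of_lt (Nat.sub_le _ _) j.isLt⟩ := by
        intro j hj0 hej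
        have hji : j ≠ i := by
          intro h; subst h; simp [he'] at hej
        have hejne : e j ≠ 0 := by simpa [he', if_neg hji] using hej
        have hjS : j ∈ S := by simp [hS, hejne]
        have hjlt : (j : ℕ) < (i : ℕ) :=
          lt_of_le_of_ne (S.le_max' j hjS) (fun h => hji (Fin.ext h))
        have hpredne : (⟨(j : ℕ) - 1, lt_of_le_of_lt (Nat.sub_le _ _) j.isLt⟩ : Fin n) ≠ i := by
          intro h
          have := congrArg Fin.val h
          simp at this
          omega
        simp only [hx', if_neg hji, if_neg hpredne]
        exact hc j hj0 hejne
      calc runs (x + e) = runs (x' + e') := by rw [hsum]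
        _ ≤ runs x' := ih x' e' hcard' h0' hc'
        _ ≤ runs x := runs_flip x i hi0 hib
    · have : e = 0 := by
        funext j
        simp only [Pi.zero_apply]
        by_contra hj
        exact hne ⟨j, by simp [hS, hj]⟩
      simp [this]

/-- A grain-error cannot increase the number of runs. -/
theorem stmt1 {n t : ℕ} (x y : Fin n → ZMod 2) (h : y ∈ grainBall t x) :
    runs y ≤ runs x := by
  obtain ⟨e, ⟨hcard, h0, hc⟩, rfl⟩ := h
  exact runs_aux t x e hcard h0 hc
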